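/- In ℤ[[x₁,x₂,x₃,x₄]], the series (1-x₁x₂)(1-x₂x₃)(1-x₂x₄)(1-x₁x₂x₃x₄) / ((1-x₁)(1-x₂)(1-x₃)(1-x₄)(1-x₁x₂x₃)(1-x₁x₂x₄)(1-x₂x₃x₄)(1-x₁x₂²x₃x₄)) equals 1/((1-x₁x₂²x₃x₄)(1-x₁)(1-x₃)(1-x₄)) + x₂/((1-x₁x₂x₄)(1-x₂)(1-x₂x₃x₄)(1-x₁x₂x₃)), and hence all of its coefficients are nonnegative. -/

import Mathlib

open MvPowerSeries Finsupp

open Classical in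
noncomputable def geom (e : Fin 4 →₀ ℕ) : MvPowerSeries (Fin 4) ℤ :=
  fun d => if ∃ n : ℕ, d = n • e then 1 else 0

open Classical in
theorem coeff_geom (e d : Fin 4 →₀ ℕ) :
    MvPowerSeries.coeff d (geom e) = if ∃ n : ℕ, d = n • e then 1 else 0 := rfl

theorem geom_nonneg (e d : Fin 4 →₀ ℕ) : 0 ≤ MvPowerSeries.coeff d (geom e) := by
  rw [coeff_geom]; split <;> norm_num

open Classical in
theorem one_sub_monomial_mul_geom (e : Fin 4 →₀ ℕ) (he : e ≠ 0) :
    (1 - MvPowerSeries.monomial e 1) * geom e = 1 := by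
  ext d
  rw [sub_mul, one_mul, map_sub, MvPowerSeries.coeff_monomial_mul, MvPowerSeries.coeff_one]
  simp only [coeff_geom, one_mul]
  by_cases h : ∃ n : ℕ, d = n • e
  · rw [if_pos h]
    obtain ⟨n, rfl⟩ := h
    cases n with
    | zero =>
      have hne : ¬ e ≤ (0 : Fin 4 →₀ ℕ) := fun hle => he (nonpos_iff_eq_zero.mp hle)
      rw [zero_smul, if_neg hne, if_pos rfl, sub_zero]
    | succ n =>
      rw [succ_nsmul']
      rw [if_pos le_self_add, add_tsub_cancel_left, if_pos ⟨n, rfl⟩,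
        if_neg (fun h0 => he ((add_eq_zero.mp h0).1)), sub_self]
  · have hd0 : ¬ d = 0 := fun h0 => h ⟨0, by simp [h0]⟩
    rw [if_neg h, if_neg hd0]
    by_cases hle : e ≤ d
    · rw [if_pos hle, if_neg, sub_zero]
      rintro ⟨n, hn⟩
      exact h ⟨n + 1, by rw [succ_nsmul', ← hn, add_tsub_cancel_of_le hle]⟩
    · rw [if_neg hle, sub_zero]

theorem my_inverse_eq {a b : MvPowerSeries (Fin 4) ℤ} (h : a * b = 1) :
    Ring.inverse a = b := by
  have ha : IsUnit a := IsUnit.of_mul_eq_one b h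
  calc Ring.inverse a = Ring.inverse a * (a * b) := by rw [h, mul_one]
    _ = (Ring.inverse a * a) * b := by ring
    _ = b := by rw [Ring.inverse_mul_cancel _ ha, one_mul]

theorem coeff_mul_nonneg {f g : MvPowerSeries (Fin 4) ℤ}
    (hf : ∀ d, 0 ≤ MvPowerSeries.coeff d f) (hg : ∀ d, 0 ≤ MvPowerSeries.coeff d g) :
    ∀ d, 0 ≤ MvPowerSeries.coeff d (f * g) := by
  intro d
  classical
  rw [MvPowerSeries.coeff_mul]
  exact Finset.sum_nonneg fun p _ => mul_nonneg (hf _) (hg _)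

noncomputable def y (i : Fin 4) : MvPowerSeries (Fin 4) ℤ := MvPowerSeries.X i

theorem blattner_aux :
    (1 - y 0 * y 1) * (1 - y 1 * y 2) * (1 - y 1 * y 3) * (1 - y 0 * y 1 * y 2 * y 3) *
        Ring.inverse ((1 - y 0) * (1 - y 1) * (1 - y 2) * (1 - y 3) *
          (1 - y 0 * y 1 * y 2) * (1 - y 0 * y 1 * y 3) * (1 - y 1 * y 2 * y 3) *
          (1 - y 0 * y 1 ^ 2 * y 2 * y 3))
        = Ring.inverse ((1 - y 0 * y 1 ^ 2 * y 2 * y 3) * (1 - y 0) * (1 - y 2) * (1 - y 3))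
          + y 1 * Ring.inverse ((1 - y 0 * y 1 * y 3) * (1 - y 1) * (1 - y 1 * y 2 * y 3) *
              (1 - y 0 * y 1 * y 2))
      ∧ ∀ d : Fin 4 →₀ ℕ,
          0 ≤ MvPowerSeries.coeff d
            ((1 - y 0 * y 1) * (1 - y 1 * y 2) * (1 - y 1 * y 3) * (1 - y 0 * y 1 * y 2 * y 3) *
              Ring.inverse ((1 - y 0) * (1 - y 1) * (1 - y 2) * (1 - y 3) *
                (1 - y 0 * y 1 * y 2) * (1 - y 0 * y 1 * y 3) * (1 - y 1 * y 2 * y 3) *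
                (1 - y 0 * y 1 ^ 2 * y 2 * y 3))) := by
  simp only [y]
  have h1 : (1 - X 0 : MvPowerSeries (Fin 4) ℤ) * geom (single 0 1) = 1 := by
    rw [MvPowerSeries.X_def]
    exact one_sub_monomial_mul_geom _ (by simp)
  have h2 : (1 - X 1 : MvPowerSeries (Fin 4) ℤ) * geom (single 1 1) = 1 := by
    rw [MvPowerSeries.X_def]
    exact one_sub_monomial_mul_geom _ (by simp)
  have h3 : (1 - X 2 : MvPowerSeries (Fin 4) ℤ) * geom (single 2 1) = 1 := by
    rw [MvPowerSeries.X_def]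
    exact one_sub_monomial_mul_geom _ (by simp)
  have h4 : (1 - X 3 : MvPowerSeries (Fin 4) ℤ) * geom (single 3 1) = 1 := by
    rw [MvPowerSeries.X_def]
    exact one_sub_monomial_mul_geom _ (by simp)
  have h123 : (1 - X 0 * X 1 * X 2 : MvPowerSeries (Fin 4) ℤ) *
      geom (single 0 1 + single 1 1 + single 2 1) = 1 := by
    rw [show (X 0 * X 1 * X 2 : MvPowerSeries (Fin 4) ℤ)
        = MvPowerSeries.monomial (single 0 1 + single 1 1 + single 2 1) 1 by
      simp only [MvPowerSeries.X_def, MvPowerSeries.monomial_mul_monomial, one_mul]]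
    refine one_sub_monomial_mul_geom _ (fun h => ?_)
    have := DFunLike.congr_fun h 1
    simp [Finsupp.single_apply] at this
  have h124 : (1 - X 0 * X 1 * X 3 : MvPowerSeries (Fin 4) ℤ) *
      geom (single 0 1 + single 1 1 + single 3 1) = 1 := by
    rw [show (X 0 * X 1 * X 3 : MvPowerSeries (Fin 4) ℤ)
        = MvPowerSeries.monomial (single 0 1 + single 1 1 + single 3 1) 1 by
      simp only [MvPowerSeries.X_def, MvPowerSeries.monomial_mul_monomial, one_mul]]
    refine one_sub_monomial_mul_geom _ (fun h => ?_)
    have := DFunLike.congr_fun h 1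
    simp [Finsupp.single_apply] at this
  have h234 : (1 - X 1 * X 2 * X 3 : MvPowerSeries (Fin 4) ℤ) *
      geom (single 1 1 + single 2 1 + single 3 1) = 1 := by
    rw [show (X 1 * X 2 * X 3 : MvPowerSeries (Fin 4) ℤ)
        = MvPowerSeries.monomial (single 1 1 + single 2 1 + single 3 1) 1 by
      simp only [MvPowerSeries.X_def, MvPowerSeries.monomial_mul_monomial, one_mul]]
    refine one_sub_monomial_mul_geom _ (fun h => ?_)
    have := DFunLike.congr_fun h 1
    simp [Finsupp.single_apply] at this
  have hB : (1 - X 0 * X 1 ^ 2 * X 2 * X 3 : MvPowerSeries (Fin 4) ℤ) *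
      geom (single 0 1 + single 1 2 + single 2 1 + single 3 1) = 1 := by
    rw [show (X 0 * X 1 ^ 2 * X 2 * X 3 : MvPowerSeries (Fin 4) ℤ)
        = MvPowerSeries.monomial (single 0 1 + single 1 2 + single 2 1 + single 3 1) 1 by
      rw [MvPowerSeries.X_pow_eq]
      simp only [MvPowerSeries.X_def, MvPowerSeries.monomial_mul_monomial, one_mul]]
    refine one_sub_monomial_mul_geom _ (fun h => ?_)
    have := DFunLike.congr_fun h 1
    simp [Finsupp.single_apply] at this
  set g1 := geom (single 0 1) with hg1
  set g2 := geom (single 1 1) with hg2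
  set g3 := geom (single 2 1) with hg3
  set g4 := geom (single 3 1) with hg4
  set g123 := geom (single 0 1 + single 1 1 + single 2 1) with hg123
  set g124 := geom (single 0 1 + single 1 1 + single 3 1) with hg124
  set g234 := geom (single 1 1 + single 2 1 + single 3 1) with hg234
  set gB := geom (single 0 1 + single 1 2 + single 2 1 + single 3 1) with hgB
  have hD1 : ((1 - X 0 * X 1 ^ 2 * X 2 * X 3) * (1 - X 0) * (1 - X 2) * (1 - X 3) :
      MvPowerSeries (Fin 4) ℤ) * (gB * g1 * g3 * g4) = 1 := by
    have h' : ((1 - X 0 * X 1 ^ 2 * X 2 * X 3) * (1 - X 0) * (1 - X 2) * (1 - X 3) :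
        MvPowerSeries (Fin 4) ℤ) * (gB * g1 * g3 * g4)
        = ((1 - X 0 * X 1 ^ 2 * X 2 * X 3) * gB) * ((1 - X 0) * g1) * ((1 - X 2) * g3) *
          ((1 - X 3) * g4) := by ring
    rw [h', hB, h1, h3, h4]; ring
  have hD2 : ((1 - X 0 * X 1 * X 3) * (1 - X 1) * (1 - X 1 * X 2 * X 3) * (1 - X 0 * X 1 * X 2) :
      MvPowerSeries (Fin 4) ℤ) * (g124 * g2 * g234 * g123) = 1 := by
    have h' : ((1 - X 0 * X 1 * X 3) * (1 - X 1) * (1 - X 1 * X 2 * X 3) * (1 - X 0 * X 1 * X 2) :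
        MvPowerSeries (Fin 4) ℤ) * (g124 * g2 * g234 * g123)
        = ((1 - X 0 * X 1 * X 3) * g124) * ((1 - X 1) * g2) * ((1 - X 1 * X 2 * X 3) * g234) *
          ((1 - X 0 * X 1 * X 2) * g123) := by ring
    rw [h', h124, h2, h234, h123]; ring
  have hD : ((1 - X 0) * (1 - X 1) * (1 - X 2) * (1 - X 3) *
      (1 - X 0 * X 1 * X 2) * (1 - X 0 * X 1 * X 3) * (1 - X 1 * X 2 * X 3) *
      (1 - X 0 * X 1 ^ 2 * X 2 * X 3) : MvPowerSeries (Fin 4) ℤ) *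
      ((gB * g1 * g3 * g4) * (g124 * g2 * g234 * g123)) = 1 := by
    have h' : ((1 - X 0) * (1 - X 1) * (1 - X 2) * (1 - X 3) *
        (1 - X 0 * X 1 * X 2) * (1 - X 0 * X 1 * X 3) * (1 - X 1 * X 2 * X 3) *
        (1 - X 0 * X 1 ^ 2 * X 2 * X 3) : MvPowerSeries (Fin 4) ℤ) *
        ((gB * g1 * g3 * g4) * (g124 * g2 * g234 * g123))
        = (((1 - X 0 * X 1 ^ 2 * X 2 * X 3) * (1 - X 0) * (1 - X 2) * (1 - X 3)) *
            (gB * g1 * g3 * g4)) *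
          (((1 - X 0 * X 1 * X 3) * (1 - X 1) * (1 - X 1 * X 2 * X 3) * (1 - X 0 * X 1 * X 2)) *
            (g124 * g2 * g234 * g123)) := by ring
    rw [h', hD1, hD2]; ring
  have hmain : ((1 - X 0 * X 1) * (1 - X 1 * X 2) * (1 - X 1 * X 3) *
      (1 - X 0 * X 1 * X 2 * X 3) : MvPowerSeries (Fin 4) ℤ) *
      ((gB * g1 * g3 * g4) * (g124 * g2 * g234 * g123))
      = (gB * g1 * g3 * g4) + X 1 * (g124 * g2 * g234 * g123) := by
    linear_combination (gB * g1 * g3 * g4) * hD2 + (X 1 : MvPowerSeries (Fin 4) ℤ) *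
      (g124 * g2 * g234 * g123) * hD1
  constructor
  · rw [my_inverse_eq hD, my_inverse_eq hD1, my_inverse_eq hD2, hmain]
  · intro d
    rw [my_inverse_eq hD, hmain, map_add]
    have hX1 : ∀ d, 0 ≤ MvPowerSeries.coeff d (X 1 : MvPowerSeries (Fin 4) ℤ) := by
      intro d
      rw [MvPowerSeries.coeff_X]
      split <;> norm_num
    exact add_nonneg
      (coeff_mul_nonneg (coeff_mul_nonneg (coeff_mul_nonneg (geom_nonneg _) (geom_nonneg _))
        (geom_nonneg _)) (geom_nonneg _) d)
      (coeff_mul_nonneg hX1 (coeff_mul_nonneg (coeff_mul_nonneg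
        (coeff_mul_nonneg (geom_nonneg _) (geom_nonneg _)) (geom_nonneg _)) (geom_nonneg _)) d)

/-- `b(0)` for `so₈` (type `D₄`) with all simple roots noncompact: partial fraction
decomposition in `ℤ[[x₁,x₂,x₃,x₄]]`, and hence all coefficients are nonnegative. -/
theorem blattner_so8 :
    let x₁ : MvPowerSeries (Fin 4) ℤ := MvPowerSeries.X 0
    let x₂ : MvPowerSeries (Fin 4) ℤ := MvPowerSeries.X 1
    let x₃ : MvPowerSeries (Fin 4) ℤ := MvPowerSeries.X 2
    let x₄ : MvPowerSeries (Fin 4) ℤ := MvPowerSeries.X 3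
    (1 - x₁ * x₂) * (1 - x₂ * x₃) * (1 - x₂ * x₄) * (1 - x₁ * x₂ * x₃ * x₄) *
        Ring.inverse ((1 - x₁) * (1 - x₂) * (1 - x₃) * (1 - x₄) *
          (1 - x₁ * x₂ * x₃) * (1 - x₁ * x₂ * x₄) * (1 - x₂ * x₃ * x₄) *
          (1 - x₁ * x₂ ^ 2 * x₃ * x₄))
        = Ring.inverse ((1 - x₁ * x₂ ^ 2 * x₃ * x₄) * (1 - x₁) * (1 - x₃) * (1 - x₄))
          + x₂ * Ring.inverse ((1 - x₁ * x₂ * x₄) * (1 - x₂) * (1 - x₂ * x₃ * x₄) *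
              (1 - x₁ * x₂ * x₃))
      ∧ ∀ d : Fin 4 →₀ ℕ,
          0 ≤ MvPowerSeries.coeff d
            ((1 - x₁ * x₂) * (1 - x₂ * x₃) * (1 - x₂ * x₄) * (1 - x₁ * x₂ * x₃ * x₄) *
              Ring.inverse ((1 - x₁) * (1 - x₂) * (1 - x₃) * (1 - x₄) *
                (1 - x₁ * x₂ * x₃) * (1 - x₁ * x₂ * x₄) * (1 - x₂ * x₃ * x₄) *
                (1 - x₁ * x₂ ^ 2 * x₃ * x₄))) :=
  blattner_aux
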